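/- arXiv:2404.05664 — 6 statements merged into one kernel-verified Lean document; each statement's English description precedes it below -/
import Mathlib

section
/- For all integers j ≥ i ≥ 0, the number of lattice paths from (0,0) to (i,j) using unit steps (1,0) and (0,1) that stay weakly above the diagonal y = x equals ((j+1-i)/(j+i+1)) * C(j+i+1, i). -/
open scoped Classical
open Finset

/-- Lattice paths from (0,0) to (i,j) with unit steps right ((1,0), encoded `false`) and
up ((0,1), encoded `true`) that stay weakly above the diagonal y = x: every prefix
contains at least as many up-steps as right-steps. -/
noncomputable def abovePaths (i j : ℕ) : Finset (Fin (i + j) → Bool) :=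
  Finset.univ.filter (fun w =>
    (Finset.univ.filter (fun s : Fin (i + j) => w s = false)).card = i ∧
    ∀ k : ℕ, k ≤ i + j →
      (Finset.univ.filter (fun s : Fin (i + j) => (s : ℕ) < k ∧ w s = false)).card ≤
      (Finset.univ.filter (fun s : Fin (i + j) => (s : ℕ) < k ∧ w s = true)).card)

noncomputable def pcnt {N : ℕ} (w : Fin N → Bool) (k : ℕ) (c : Bool) : ℕ :=
  (Finset.univ.filter (fun s : Fin N => (s : ℕ) < k ∧ w s = c)).card

lemma pcnt_total {N : ℕ} (w : Fin N → Bool) (c : Bool) :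
    pcnt w N c = (Finset.univ.filter (fun s : Fin N => w s = c)).card := by
  unfold pcnt
  congr 1
  apply Finset.filter_congr
  intro s _
  simp [s.isLt]

lemma card_filter_lt {N k : ℕ} (hk : k ≤ N) :
    (Finset.univ.filter (fun s : Fin N => (s : ℕ) < k)).card = k := by
  have : (Finset.univ.filter (fun s : Fin N => (s : ℕ) < k)) =
      (Finset.univ : Finset (Fin k)).map (Fin.castLEEmb hk) := by
    ext s
    simp only [Finset.mem_filter, Finset.mem_univ, true_and, Finset.mem_map]
    constructor
    · intro hs
      exact ⟨⟨(s : ℕ), hs⟩, Fin.ext rfl⟩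
    · rintro ⟨t, rfl⟩
      simpa using t.isLt
  rw [this, Finset.card_map]
  simp

lemma pcnt_add {N : ℕ} (w : Fin N → Bool) (k : ℕ) (hk : k ≤ N) :
    pcnt w k false + pcnt w k true = k := by
  unfold pcnt
  have h1 : ∀ c : Bool, (Finset.univ.filter (fun s : Fin N => (s : ℕ) < k ∧ w s = c)) =
      ((Finset.univ.filter (fun s : Fin N => (s : ℕ) < k)).filter (fun s => w s = c)) := by
    intro c; rw [Finset.filter_filter]
  rw [h1 false, h1 true]
  have h2 := Finset.card_filter_add_card_filter_not
    (s := (Finset.univ.filter (fun s : Fin N => (s : ℕ) < k))) (p := fun s => w s = true)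
  simp only [Bool.not_eq_true] at h2
  rw [card_filter_lt hk] at h2
  omega

lemma pcnt_succ {N : ℕ} (w : Fin N → Bool) (k : ℕ) (hk : k < N) (c : Bool) :
    pcnt w (k+1) c = pcnt w k c + (if w ⟨k, hk⟩ = c then 1 else 0) := by
  unfold pcnt
  have hsplit : (Finset.univ.filter (fun s : Fin N => (s : ℕ) < k + 1 ∧ w s = c)) =
      (Finset.univ.filter (fun s : Fin N => (s : ℕ) < k ∧ w s = c)) ∪
      (Finset.univ.filter (fun s : Fin N => s = ⟨k, hk⟩ ∧ w s = c)) := by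
    ext s
    simp only [Finset.mem_filter, Finset.mem_union, Finset.mem_univ, true_and]
    constructor
    · rintro ⟨hs, hc⟩
      rcases Nat.lt_succ_iff_lt_or_eq.mp hs with h | h
      · exact Or.inl ⟨h, hc⟩
      · exact Or.inr ⟨Fin.ext h, hc⟩
    · rintro (⟨hs, hc⟩ | ⟨rfl, hc⟩)
      · exact ⟨Nat.lt_succ_of_lt hs, hc⟩
      · exact ⟨Nat.lt_succ_self k, hc⟩
  have hdisj : Disjoint (Finset.univ.filter (fun s : Fin N => (s : ℕ) < k ∧ w s = c))
      (Finset.univ.filter (fun s : Fin N => s = ⟨k, hk⟩ ∧ w s = c)) := by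
    rw [Finset.disjoint_left]
    intro s hs hs'
    simp only [Finset.mem_filter, Finset.mem_univ, true_and] at hs hs'
    rcases hs' with ⟨rfl, -⟩
    exact absurd hs.1 (lt_irrefl k)
  rw [hsplit, Finset.card_union_of_disjoint hdisj]
  congr 1
  by_cases hc : w ⟨k, hk⟩ = c
  · rw [if_pos hc]
    rw [Finset.card_eq_one]
    refine ⟨⟨k, hk⟩, ?_⟩
    ext s
    simp only [Finset.mem_filter, Finset.mem_univ, true_and, Finset.mem_singleton]
    constructor
    · rintro ⟨rfl, -⟩; rfl
    · rintro rfl; exact ⟨rfl, hc⟩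
  · rw [if_neg hc]
    rw [Finset.card_eq_zero, Finset.filter_eq_empty_iff]
    rintro s - ⟨rfl, hc'⟩
    exact hc hc'

lemma pcnt_castLE {M N : ℕ} (h : M ≤ N) (w : Fin N → Bool) (k : ℕ) (hk : k ≤ M) (c : Bool) :
    pcnt (fun s : Fin M => w (Fin.castLE h s)) k c = pcnt w k c := by
  unfold pcnt
  apply Finset.card_bij (fun (s : Fin M) _ => Fin.castLE h s)
  · intro s hs
    simp only [Finset.mem_filter, Finset.mem_univ, true_and] at hs ⊢
    exact hs
  · intro a _ b _ hab
    exact Fin.ext (by simpa using congrArg Fin.val hab)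
  · intro s hs
    simp only [Finset.mem_filter, Finset.mem_univ, true_and] at hs
    refine ⟨⟨(s : ℕ), lt_of_lt_of_le hs.1 hk⟩, ?_, Fin.ext rfl⟩
    simp only [Finset.mem_filter, Finset.mem_univ, true_and]
    constructor
    · exact hs.1
    · have : Fin.castLE h (⟨(s : ℕ), lt_of_lt_of_le hs.1 hk⟩ : Fin M) = s := Fin.ext rfl
      rw [this]; exact hs.2

lemma mem_abovePaths {i j : ℕ} (w : Fin (i + j) → Bool) :
    w ∈ abovePaths i j ↔
      pcnt w (i + j) false = i ∧ ∀ k, k ≤ i + j → pcnt w k false ≤ pcnt w k true := by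
  unfold abovePaths
  rw [Finset.mem_filter]
  simp only [Finset.mem_univ, true_and]
  rw [pcnt_total]
  unfold pcnt
  rfl

lemma abovePaths_zero (j : ℕ) : abovePaths 0 j = {fun _ => true} := by
  ext w
  rw [mem_abovePaths, Finset.mem_singleton]
  constructor
  · rintro ⟨h1, -⟩
    rw [pcnt_total] at h1
    rw [Finset.card_eq_zero, Finset.filter_eq_empty_iff] at h1
    funext s
    have := h1 (Finset.mem_univ s)
    revert this
    cases w s <;> simp
  · rintro rfl
    constructor
    · rw [pcnt_total]
      simp
    · intro k hk
      unfold pcnt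
      simp

lemma abovePaths_empty (i j : ℕ) (h : j < i) : abovePaths i j = ∅ := by
  rw [Finset.eq_empty_iff_forall_notMem]
  intro w hw
  rw [mem_abovePaths] at hw
  obtain ⟨h1, h2⟩ := hw
  have h3 := h2 (i + j) le_rfl
  have h4 := pcnt_add w (i + j) le_rfl
  omega

noncomputable def extW {M : ℕ} (v : Fin M → Bool) (N : ℕ) (b : Bool) : Fin N → Bool :=
  fun s => if hs : (s : ℕ) < M then v ⟨(s : ℕ), hs⟩ else b

lemma extW_lt {M N : ℕ} (v : Fin M → Bool) (b : Bool) (s : Fin N) (hs : (s : ℕ) < M) :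
    extW v N b s = v ⟨(s : ℕ), hs⟩ := dif_pos hs

lemma extW_ge {M N : ℕ} (v : Fin M → Bool) (b : Bool) (s : Fin N) (hs : ¬ (s : ℕ) < M) :
    extW v N b s = b := dif_neg hs

lemma pcnt_congr {N : ℕ} (w : Fin N → Bool) {k k' : ℕ} (hk : k = k') (c : Bool) :
    pcnt w k c = pcnt w k' c := by rw [hk]

lemma card_last_false (i j : ℕ) (h : i ≤ j) :
    ((abovePaths (i+1) (j+1)).filter
        (fun w => w (⟨i+j+1, by omega⟩ : Fin ((i+1)+(j+1))) = false)).card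
      = (abovePaths i (j+1)).card := by
  have hle : i + (j+1) ≤ (i+1) + (j+1) := by omega
  have hkk : (i+1) + (j+1) = (i+j+1) + 1 := by omega
  have hk1 : i + j + 1 < (i+1) + (j+1) := by omega
  apply Finset.card_bij (fun (w : Fin ((i+1)+(j+1)) → Bool) _ =>
    (fun s : Fin (i+(j+1)) => w (Fin.castLE hle s)))
  · intro w hw
    rw [Finset.mem_filter] at hw
    obtain ⟨hw, hlast⟩ := hw
    rw [mem_abovePaths] at hw ⊢
    obtain ⟨hw1, hw2⟩ := hw
    rw [pcnt_congr w hkk false, pcnt_succ w (i+j+1) hk1 false, hlast, if_pos rfl] at hw1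
    constructor
    · rw [pcnt_castLE hle w (i + (j+1)) le_rfl false]
      have : i + (j+1) = i + j + 1 := by omega
      rw [pcnt_congr w this false]
      omega
    · intro k hk
      rw [pcnt_castLE hle w k hk false, pcnt_castLE hle w k hk true]
      exact hw2 k (by omega)
  · intro a ha b hb hab
    rw [Finset.mem_filter] at ha hb
    funext s
    rcases lt_or_ge (s : ℕ) (i+j+1) with hs | hs
    · have h1 : s = Fin.castLE hle ⟨(s : ℕ), by omega⟩ := Fin.ext rfl
      rw [h1]
      exact congrFun hab _
    · have h2 : s = (⟨i+j+1, by omega⟩ : Fin ((i+1)+(j+1))) := by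
        have := s.isLt
        apply Fin.ext
        simp only [Fin.val_mk]
        omega
      rw [h2, ha.2, hb.2]
  · intro v hv
    refine ⟨extW v ((i+1)+(j+1)) false, ?_, ?_⟩
    · have hres : (fun s : Fin (i+(j+1)) => extW v ((i+1)+(j+1)) false (Fin.castLE hle s)) = v := by
        funext s
        rw [extW_lt v false _ (show ((Fin.castLE hle s : Fin ((i+1)+(j+1))) : ℕ) < i + (j+1) from s.isLt)]
        exact congrArg v (Fin.ext rfl)
      have hcnt : ∀ k, k ≤ i + (j+1) → ∀ c,
          pcnt (extW v ((i+1)+(j+1)) false) k c = pcnt v k c := by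
        intro k hk c
        rw [← pcnt_castLE hle _ k hk c, hres]
      have hlast : extW v ((i+1)+(j+1)) false ⟨i+j+1, by omega⟩ = false := by
        apply extW_ge
        simp only [Fin.val_mk]
        omega
      rw [Finset.mem_filter]
      rw [mem_abovePaths] at hv
      obtain ⟨hv1, hv2⟩ := hv
      refine ⟨?_, hlast⟩
      rw [mem_abovePaths]
      have htot : pcnt (extW v ((i+1)+(j+1)) false) ((i+1)+(j+1)) false = i + 1 := by
        rw [pcnt_congr _ hkk false, pcnt_succ _ (i+j+1) hk1 false, hlast, if_pos rfl]
        rw [pcnt_congr _ (show i+j+1 = i+(j+1) by omega) false, hcnt (i+(j+1)) le_rfl false]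
        omega
      refine ⟨htot, ?_⟩
      intro k hk
      rcases le_or_gt k (i+(j+1)) with hk' | hk'
      · rw [hcnt k hk' false, hcnt k hk' true]
        exact hv2 k hk'
      · have hkeq : k = (i+1)+(j+1) := by omega
        subst hkeq
        have hadd := pcnt_add (extW v ((i+1)+(j+1)) false) ((i+1)+(j+1)) le_rfl
        omega
    · funext s
      rw [extW_lt v false _ (show ((Fin.castLE hle s : Fin ((i+1)+(j+1))) : ℕ) < i + (j+1) from s.isLt)]
      exact congrArg v (Fin.ext rfl)

lemma card_last_true (i j : ℕ) (h : i ≤ j) :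
    ((abovePaths (i+1) (j+1)).filter
        (fun w => w (⟨i+j+1, by omega⟩ : Fin ((i+1)+(j+1))) = true)).card
      = (abovePaths (i+1) j).card := by
  have hle : (i+1) + j ≤ (i+1) + (j+1) := by omega
  have hkk : (i+1) + (j+1) = (i+j+1) + 1 := by omega
  have hk1 : i + j + 1 < (i+1) + (j+1) := by omega
  have hM : (i+1) + j = i + j + 1 := by omega
  apply Finset.card_bij (fun (w : Fin ((i+1)+(j+1)) → Bool) _ =>
    (fun s : Fin ((i+1)+j) => w (Fin.castLE hle s)))
  · intro w hw
    rw [Finset.mem_filter] at hw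
    obtain ⟨hw, hlast⟩ := hw
    rw [mem_abovePaths] at hw ⊢
    obtain ⟨hw1, hw2⟩ := hw
    rw [pcnt_congr w hkk false, pcnt_succ w (i+j+1) hk1 false, hlast] at hw1
    rw [if_neg (by simp)] at hw1
    constructor
    · rw [pcnt_castLE hle w ((i+1) + j) le_rfl false, pcnt_congr w hM false]
      omega
    · intro k hk
      rw [pcnt_castLE hle w k hk false, pcnt_castLE hle w k hk true]
      exact hw2 k (by omega)
  · intro a ha b hb hab
    rw [Finset.mem_filter] at ha hb
    funext s
    rcases lt_or_ge (s : ℕ) (i+j+1) with hs | hs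
    · have h1 : s = Fin.castLE hle ⟨(s : ℕ), by omega⟩ := Fin.ext rfl
      rw [h1]
      exact congrFun hab _
    · have h2 : s = (⟨i+j+1, by omega⟩ : Fin ((i+1)+(j+1))) := by
        have := s.isLt
        apply Fin.ext
        simp only [Fin.val_mk]
        omega
      rw [h2, ha.2, hb.2]
  · intro v hv
    refine ⟨extW v ((i+1)+(j+1)) true, ?_, ?_⟩
    · have hres : (fun s : Fin ((i+1)+j) => extW v ((i+1)+(j+1)) true (Fin.castLE hle s)) = v := by
        funext s
        rw [extW_lt v true _ (show ((Fin.castLE hle s : Fin ((i+1)+(j+1))) : ℕ) < (i+1) + j from s.isLt)]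
        exact congrArg v (Fin.ext rfl)
      have hcnt : ∀ k, k ≤ (i+1) + j → ∀ c,
          pcnt (extW v ((i+1)+(j+1)) true) k c = pcnt v k c := by
        intro k hk c
        rw [← pcnt_castLE hle _ k hk c, hres]
      have hlast : extW v ((i+1)+(j+1)) true ⟨i+j+1, by omega⟩ = true := by
        apply extW_ge
        simp only [Fin.val_mk]
        omega
      rw [Finset.mem_filter]
      rw [mem_abovePaths] at hv
      obtain ⟨hv1, hv2⟩ := hv
      refine ⟨?_, hlast⟩
      rw [mem_abovePaths]
      have htot : pcnt (extW v ((i+1)+(j+1)) true) ((i+1)+(j+1)) false = i + 1 := by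
        rw [pcnt_congr _ hkk false, pcnt_succ _ (i+j+1) hk1 false, hlast, if_neg (by simp)]
        rw [pcnt_congr _ (show i+j+1 = (i+1)+j by omega) false, hcnt ((i+1)+j) le_rfl false]
        omega
      refine ⟨htot, ?_⟩
      intro k hk
      rcases le_or_gt k ((i+1)+j) with hk' | hk'
      · rw [hcnt k hk' false, hcnt k hk' true]
        exact hv2 k hk'
      · have hkeq : k = (i+1)+(j+1) := by omega
        subst hkeq
        have hadd := pcnt_add (extW v ((i+1)+(j+1)) true) ((i+1)+(j+1)) le_rfl
        omega
    · funext s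
      rw [extW_lt v true _ (show ((Fin.castLE hle s : Fin ((i+1)+(j+1))) : ℕ) < (i+1) + j from s.isLt)]
      exact congrArg v (Fin.ext rfl)

lemma rec1 (i j : ℕ) (h : i ≤ j) :
    (abovePaths (i+1) (j+1)).card =
      (abovePaths i (j+1)).card + (abovePaths (i+1) j).card := by
  have hL : i + j + 1 < (i+1) + (j+1) := by omega
  have hcover : abovePaths (i+1) (j+1) =
      ((abovePaths (i+1) (j+1)).filter
        (fun w : Fin ((i+1)+(j+1)) → Bool => w ⟨i+j+1, hL⟩ = false)) ∪
      ((abovePaths (i+1) (j+1)).filter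
        (fun w : Fin ((i+1)+(j+1)) → Bool => w ⟨i+j+1, hL⟩ = true)) := by
    ext w
    simp only [Finset.mem_union, Finset.mem_filter]
    rcases Bool.eq_false_or_eq_true (w ⟨i+j+1, hL⟩) with hb | hb
    · tauto
    · tauto
  have hdisj : Disjoint
      ((abovePaths (i+1) (j+1)).filter
        (fun w : Fin ((i+1)+(j+1)) → Bool => w ⟨i+j+1, hL⟩ = false))
      ((abovePaths (i+1) (j+1)).filter
        (fun w : Fin ((i+1)+(j+1)) → Bool => w ⟨i+j+1, hL⟩ = true)) := by
    rw [Finset.disjoint_left]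
    intro w hw1 hw2
    rw [Finset.mem_filter] at hw1 hw2
    rw [hw1.2] at hw2
    exact absurd hw2.2 (by simp)
  rw [hcover, Finset.card_union_of_disjoint hdisj, card_last_false i j h, card_last_true i j h]

lemma main_card : ∀ n i j, i + j = n →
    (j + i + 1) * (abovePaths i j).card = (j + 1 - i) * Nat.choose (j + i + 1) i := by
  intro n
  induction n using Nat.strong_induction_on with
  | _ n IH =>
  intro i j hn
  match i with
  | 0 =>
    rw [abovePaths_zero j]
    simp
  | (a+1) =>
    rcases lt_or_ge j (a+1) with hj | hj
    · rw [abovePaths_empty (a+1) j hj]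
      have : j + 1 - (a+1) = 0 := by omega
      simp [this]
    · obtain ⟨b, rfl⟩ : ∃ b, j = b + 1 := ⟨j - 1, by omega⟩
      have hab : a ≤ b := by omega
      rw [rec1 a b hab]
      have H1 := IH (a + (b+1)) (by omega) a (b+1) rfl
      have H2 := IH ((a+1) + b) (by omega) (a+1) b rfl
      -- normalize choose arguments
      have n1 : b + 1 + a + 1 = a + b + 2 := by omega
      have n2 : b + (a+1) + 1 = a + b + 2 := by omega
      have n3 : b + 1 + (a+1) + 1 = a + b + 3 := by omega
      rw [n1] at H1
      rw [n2] at H2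
      rw [n3]
      -- H1 : (a+b+2) * c1 = (b+2-a) * choose (a+b+2) a
      -- H2 : (a+b+2) * c2 = (b-a) * choose (a+b+2) (a+1)
      -- goal : (a+b+3) * (c1 + c2) = (b+1-a) * choose (a+b+3) (a+1)
      have hPas : Nat.choose (a+b+3) (a+1) =
          Nat.choose (a+b+2) a + Nat.choose (a+b+2) (a+1) := by
        have := Nat.choose_succ_succ (a+b+2) a
        simpa [show a+b+2+1 = a+b+3 by omega] using this
      have hP : Nat.choose (a+b+2) (a+1) * (a+1) = Nat.choose (a+b+2) a * (b+2) := by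
        have := Nat.choose_succ_right_eq (a+b+2) a
        simpa [show a+b+2-a = b+2 by omega] using this
      apply Nat.eq_of_mul_eq_mul_left (show 0 < a+b+2 by omega)
      have hs1 : a ≤ b + 1 + 1 := by omega
      have hs2 : a + 1 ≤ b + 1 := by omega
      have hs3 : a + 1 ≤ b + 1 + 1 := by omega
      zify [hs1] at H1
      zify [hs2] at H2
      zify [hs3]
      zify at hPas hP
      linear_combination ((a:ℤ)+b+3) * H1 + ((a:ℤ)+b+3) * H2 -
        ((a:ℤ)+b+2) * ((b:ℤ)+1-a) * hPas - 2 * hP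

/-- The number of diagonal lattice paths from (0,0) to (i,j) staying weakly above
y = x equals ((j+1-i)/(j+i+1))·C(j+i+1, i), for j ≥ i ≥ 0. -/
theorem abovePaths_card (i j : ℕ) (h : i ≤ j) :
    (j + i + 1) * (abovePaths i j).card = (j + 1 - i) * Nat.choose (j + i + 1) i :=
  main_card (i + j) i j rfl
end

section
/- For all n ≥ 0 and 0 ≤ ℓ ≤ n, the identity ∑_{j=ℓ}^{n} ((ℓ+1)/(2n-2j+ℓ+1)) * C(2j-ℓ-1, j-1) * C(2n-2j+ℓ+1, n-j) = C(2n, n-ℓ) holds. -/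
open Finset Nat


private def V (N r s : ℕ) : ℕ :=
  ∑ k ∈ range (N + 1), Nat.choose (2 * k + r) k * Nat.choose (2 * (N - k) + s) (N - k)

private lemma Vsymm (N r s : ℕ) : V N r s = V N s r := by
  unfold V
  rw [← Finset.sum_range_reflect
    (fun k => Nat.choose (2 * k + r) k * Nat.choose (2 * (N - k) + s) (N - k)) (N + 1)]
  refine Finset.sum_congr rfl fun k hk => ?_
  rw [mem_range] at hk
  have h1 : N + 1 - 1 - k = N - k := by omega
  have h2 : N - (N - k) = k := by omega
  rw [h1, h2, mul_comm]

private lemma SR1 (N r s : ℕ) : V (N+1) (r+1) s = V (N+1) r s + V N (r+2) s := by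
  unfold V
  rw [Finset.sum_range_succ'
      (fun k => Nat.choose (2 * k + (r+1)) k * Nat.choose (2 * ((N+1) - k) + s) ((N+1) - k)) (N+1),
      Finset.sum_range_succ'
      (fun k => Nat.choose (2 * k + r) k * Nat.choose (2 * ((N+1) - k) + s) ((N+1) - k)) (N+1)]
  simp only [Nat.succ_sub_succ, Nat.mul_zero, Nat.zero_add, Nat.choose_zero_right,
    Nat.sub_zero, one_mul]
  have key : ∀ x : ℕ, (2*(x+1)+(r+1)).choose (x+1)
      = (2*(x+1)+r).choose (x+1) + (2*x+(r+2)).choose x := by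
    intro x
    have h := Nat.choose_succ_succ (2*x+r+2) x
    simp only [Nat.succ_eq_add_one] at h
    rw [show 2*(x+1)+(r+1) = 2*x+r+2+1 by ring, show 2*(x+1)+r = 2*x+r+2 by ring,
      show 2*x+(r+2) = 2*x+r+2 by ring]
    omega
  simp only [key, add_mul]
  rw [Finset.sum_add_distrib]
  omega

private lemma SR2 (N r s : ℕ) : V (N+1) r (s+1) = V (N+1) r s + V N r (s+2) := by
  rw [Vsymm (N+1) r (s+1), Vsymm (N+1) r s, Vsymm N r (s+2)]
  exact SR1 N s r

private lemma L1 : ∀ N r s : ℕ, V N (r+1) s = V N r (s+1)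
  | 0, r, s => by simp [V]
  | N+1, r, s => by
    rw [SR1 N r s, SR2 N r s, show r+2 = (r+1)+1 by omega, L1 N (r+1) s,
      show s+2 = (s+1)+1 by omega, L1 N r (s+1)]

private lemma Lshift : ∀ s N r : ℕ, V N r s = V N (r + s) 0
  | 0, N, r => by simp
  | s+1, N, r => by
    rw [← L1 N r s, Lshift s N (r+1), show r+1+s = r+(s+1) by omega]

private lemma cc (m : ℕ) : Nat.choose (2*m+2) m + catalan (m+1) = centralBinom (m+1) := by
  apply Nat.eq_of_mul_eq_mul_left (show 0 < m+2 by omega)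
  have h := Nat.choose_succ_right_eq (2*m+2) m
  have h2 : 2*m+2-m = m+2 := by omega
  rw [h2] at h
  have hcat := succ_mul_catalan_eq_centralBinom (m+1)
  have hc : centralBinom (m+1) = Nat.choose (2*m+2) (m+1) := by
    unfold centralBinom; congr 1
  rw [hc] at hcat ⊢
  nlinarith [h, hcat]

private lemma two (m : ℕ) : centralBinom (m+1) = 2 * Nat.choose (2*m+1) m := by
  have hc : centralBinom (m+1) = Nat.choose (2*m+2) (m+1) := by
    unfold centralBinom; congr 1
  have h := Nat.choose_succ_succ (2*m+1) m
  have hs : Nat.choose (2*m+1) (2*m+1-(m+1)) = Nat.choose (2*m+1) (m+1) :=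
    Nat.choose_symm (by omega)
  have h2 : 2*m+1-(m+1) = m := by omega
  rw [h2] at hs
  simp only [Nat.succ_eq_add_one] at h
  rw [hc, show 2*m+2 = 2*m+1+1 by ring]
  omega

private lemma four (j : ℕ) : centralBinom (j+1) + 2*catalan j = 4*centralBinom j := by
  apply Nat.eq_of_mul_eq_mul_left (show 0 < j+1 by omega)
  have h1 := Nat.succ_mul_centralBinom_succ j
  have h2 := succ_mul_catalan_eq_centralBinom j
  nlinarith [h1, h2]

private lemma catC (k : ℕ) : (2*k+1) * catalan k = Nat.choose (2*k+1) k := by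
  apply Nat.eq_of_mul_eq_mul_left (show 0 < k+1 by omega)
  have h := Nat.add_one_mul_choose_eq (2*k) k
  have h2 := succ_mul_catalan_eq_centralBinom k
  have hs : Nat.choose (2*k+1) (2*k+1-(k+1)) = Nat.choose (2*k+1) (k+1) :=
    Nat.choose_symm (by omega)
  have h3 : 2*k+1-(k+1) = k := by omega
  rw [h3] at hs
  unfold centralBinom at h2
  nlinarith [h, h2, hs]

private lemma catalan_succ_sum (N : ℕ) :
    catalan (N+1) = ∑ m ∈ range (N+1), catalan m * catalan (N - m) := by
  rw [catalan_succ, ← Finset.sum_range fun i => catalan i * catalan (N - i)]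

private lemma L3 : ∀ N : ℕ, ∑ m ∈ range (N+1), catalan m * centralBinom (N - m)
    = Nat.choose (2*N+1) N
  | 0 => by simp [centralBinom]
  | N+1 => by
    have IH := L3 N
    rw [Finset.sum_range_succ]
    have e1 : ∑ m ∈ range (N+1), catalan m * centralBinom (N+1 - m)
        + 2 * ∑ m ∈ range (N+1), catalan m * catalan (N - m)
        = 4 * ∑ m ∈ range (N+1), catalan m * centralBinom (N - m) := by
      rw [Finset.mul_sum, Finset.mul_sum, ← Finset.sum_add_distrib]
      refine Finset.sum_congr rfl fun m hm => ?_
      rw [mem_range] at hm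
      have hrw : N + 1 - m = (N - m) + 1 := by omega
      rw [hrw]
      have := four (N - m)
      nlinarith [this]
    rw [← catalan_succ_sum] at e1
    rw [IH] at e1
    -- target: sum + catalan (N+1) * centralBinom (N+1-(N+1)) = choose (2*(N+1)+1) (N+1)
    have hrw2 : N + 1 - (N+1) = 0 := by omega
    rw [hrw2]
    have hcb0 : centralBinom 0 = 1 := Nat.centralBinom_zero
    rw [hcb0, mul_one]
    have key : Nat.choose (2*(N+1)+1) (N+1) + catalan (N+1) = 4 * Nat.choose (2*N+1) N := by
      have p1 := Nat.choose_succ_succ (2*N+2) N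
      have p2 := two N
      have p3 := cc N
      have hc : centralBinom (N+1) = Nat.choose (2*N+2) (N+1) := by
        unfold centralBinom; congr 1
      rw [hc] at p2 p3
      simp only [Nat.succ_eq_add_one] at p1
      rw [show 2*(N+1)+1 = 2*N+2+1 by ring]
      omega
    omega

private lemma Gbase (M : ℕ) : V (M+1) 0 0 = V M 2 0 + Nat.choose (2*M+3) (M+1) := by
  have hL3 := L3 (M+1)
  rw [Finset.sum_range_succ' (fun m => catalan m * centralBinom (M+1-m)) (M+1)] at hL3
  simp only [Nat.succ_sub_succ, Nat.sub_zero, catalan_zero, one_mul, Nat.centralBinom] at hL3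
  unfold V
  rw [Finset.sum_range_succ'
    (fun k => Nat.choose (2*k+0) k * Nat.choose (2*((M+1)-k)+0) ((M+1)-k)) (M+1)]
  simp only [add_zero, Nat.succ_sub_succ, Nat.sub_zero, Nat.mul_zero, Nat.choose_zero_right,
    one_mul]
  have split : ∀ k ∈ range (M+1),
      Nat.choose (2*(k+1)) (k+1) * Nat.choose (2*(M-k)) (M-k)
        = Nat.choose (2*k+2) k * Nat.choose (2*(M-k)) (M-k)
          + catalan (k+1) * Nat.choose (2*(M+1)-(k+1)*2) (M-k) := by
    intro k hk
    rw [mem_range] at hk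
    have h := cc k
    have hcb : centralBinom (k+1) = Nat.choose (2*(k+1)) (k+1) := rfl
    rw [hcb] at h
    have harg : 2*(M+1)-(k+1)*2 = 2*(M-k) := by omega
    rw [harg, ← h, add_mul]
  rw [Finset.sum_congr rfl split, Finset.sum_add_distrib]
  have harg2 : ∀ k ∈ range (M+1),
      catalan (k+1) * Nat.choose (2*(M+1)-(k+1)*2) (M-k)
        = catalan (k+1) * Nat.choose (2*(M-k)) (M-k) := by
    intro k hk; rw [mem_range] at hk
    congr 2
    omega
  rw [Finset.sum_congr rfl harg2]
  rw [show 2*M+3 = 2*(M+1)+1 by ring]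
  omega

private lemma G : ∀ N t : ℕ, V (N+1) t 0 = V N (t+2) 0 + Nat.choose (2*N+t+3) (N+1)
  | 0, t => by
    simp [V, Finset.sum_range_succ, Nat.choose_one_right]
    omega
  | N+1, 0 => by
    have h := Gbase (N+1)
    ring_nf at h ⊢
    omega
  | N+1, t+1 => by
    have h3 := SR1 (N+1) t 0
    have h1 := G (N+1) t
    have h2 := G N (t+2)
    have h4 := SR1 N (t+2) 0
    have h5 := Nat.choose_succ_succ (2*N+t+5) (N+1)
    simp only [Nat.succ_eq_add_one] at h5
    ring_nf at h1 h2 h3 h4 h5 ⊢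
    omega
  termination_by N t => (N, t)

private lemma KEY : ∀ N l : ℕ, V N (l+1) l
    = (∑ k ∈ range N, Nat.choose (2*k+l+3) k * Nat.choose (2*(N-1-k)+l) (N-1-k))
      + Nat.choose (2*N+2*l+2) N
  | 0, l => by simp [V]
  | M+1, l => by
    have hsum : (∑ k ∈ range (M+1),
        Nat.choose (2*k+l+3) k * Nat.choose (2*(M+1-1-k)+l) (M+1-1-k)) = V M (l+3) l := by
      unfold V
      refine Finset.sum_congr rfl fun k hk => ?_
      rw [mem_range] at hk
      have e1 : 2*k+l+3 = 2*k+(l+3) := by ring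
      have e2 : M+1-1-k = M-k := by omega
      rw [e1, e2]
    rw [hsum]
    have h1 := Lshift l (M+1) (l+1)
    have h2 := Lshift l M (l+3)
    have h3 := G M (2*l+1)
    ring_nf at h1 h2 h3 ⊢
    omega

private lemma ballot (k l : ℕ) :
    (l+2) * Nat.choose (2*k+l+4) (k+1) + (2*k+l+4) * Nat.choose (2*k+l+3) k
      = (2*k+l+4) * Nat.choose (2*k+l+3) (k+1) := by
  have hp := Nat.choose_succ_succ (2*k+l+3) k
  simp only [Nat.succ_eq_add_one] at hp
  have hr := Nat.choose_succ_right_eq (2*k+l+3) k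
  have e1 : 2*k+l+3-k = k+l+3 := by omega
  rw [e1] at hr
  have e2 : 2*k+l+4 = 2*k+l+3+1 := by ring
  rw [e2, hp]
  nlinarith [hr]

private lemma main1 (N l : ℕ) :
    ∑ k ∈ range (N+1), (((l:ℚ)+2) / ((2*k+l+2 : ℕ) : ℚ))
        * (Nat.choose (2*(N-k)+l) ((N-k)+l) : ℚ) * (Nat.choose (2*k+l+2) k : ℚ)
      = Nat.choose (2*N+2*l+2) N := by
  rw [Finset.sum_range_succ' (fun k => (((l:ℚ)+2) / ((2*k+l+2 : ℕ) : ℚ))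
        * (Nat.choose (2*(N-k)+l) ((N-k)+l) : ℚ) * (Nat.choose (2*k+l+2) k : ℚ)) N]
  have hT0 : (((l:ℚ)+2) / ((2*0+l+2 : ℕ) : ℚ))
        * (Nat.choose (2*(N-0)+l) ((N-0)+l) : ℚ) * (Nat.choose (2*0+l+2) 0 : ℚ)
      = (Nat.choose (2*N+l) N : ℚ) := by
    have hsymm : Nat.choose (2*N+l) (N+l) = Nat.choose (2*N+l) N := by
      have := Nat.choose_symm (show N ≤ 2*N+l by omega)
      rw [show 2*N+l-N = N+l by omega] at this
      omega
    simp only [Nat.sub_zero, Nat.mul_zero, Nat.zero_add, Nat.choose_zero_right, Nat.cast_one,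
      mul_one, hsymm]
    rw [show ((l+2 : ℕ) : ℚ) = (l:ℚ)+2 by push_cast; ring]
    rw [div_self (by positivity), one_mul]
  rw [hT0]
  have hterm : ∀ k ∈ range N, (((l:ℚ)+2) / ((2*(k+1)+l+2 : ℕ) : ℚ))
        * (Nat.choose (2*(N-(k+1))+l) ((N-(k+1))+l) : ℚ) * (Nat.choose (2*(k+1)+l+2) (k+1) : ℚ)
      = (Nat.choose (2*k+l+3) (k+1) * Nat.choose (2*(N-1-k)+l) (N-1-k) : ℕ)
        - (Nat.choose (2*k+l+3) k * Nat.choose (2*(N-1-k)+l) (N-1-k) : ℕ) := by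
    intro k hk
    rw [mem_range] at hk
    have e1 : N-(k+1) = N-1-k := by omega
    have e2 : 2*(k+1)+l+2 = 2*k+l+4 := by ring
    have hsymm : Nat.choose (2*(N-1-k)+l) ((N-1-k)+l) = Nat.choose (2*(N-1-k)+l) (N-1-k) := by
      have := Nat.choose_symm (show N-1-k ≤ 2*(N-1-k)+l by omega)
      rw [show 2*(N-1-k)+l-(N-1-k) = (N-1-k)+l by omega] at this
      omega
    rw [e1, e2, hsymm]
    have hb : ((l:ℚ)+2) * (Nat.choose (2*k+l+4) (k+1) : ℚ)
        = ((2*k+l+4 : ℕ) : ℚ) * ((Nat.choose (2*k+l+3) (k+1) : ℚ) - Nat.choose (2*k+l+3) k) := by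
      have h := ballot k l
      have h' := congrArg (Nat.cast : ℕ → ℚ) h
      push_cast at h' ⊢
      linarith
    have hden : ((2*k+l+4 : ℕ) : ℚ) ≠ 0 := by positivity
    rw [div_mul_eq_mul_div, div_mul_eq_mul_div, div_eq_iff hden]
    push_cast
    push_cast at hb
    nlinarith [hb]
  rw [Finset.sum_congr rfl hterm]
  rw [Finset.sum_sub_distrib]
  have hVpeel : ((V N (l+1) l : ℕ) : ℚ)
      = (∑ k ∈ range N, ((Nat.choose (2*k+l+3) (k+1) * Nat.choose (2*(N-1-k)+l) (N-1-k) : ℕ) : ℚ))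
        + (Nat.choose (2*N+l) N : ℚ) := by
    unfold V
    rw [Finset.sum_range_succ'
      (fun k => Nat.choose (2*k+(l+1)) k * Nat.choose (2*(N-k)+l) (N-k)) N]
    push_cast
    congr 1
    · refine Finset.sum_congr rfl fun k hk => ?_
      rw [mem_range] at hk
      rw [show 2*(k+1)+(l+1) = 2*k+l+3 by ring, show N-(k+1) = N-1-k by omega]
    · norm_num
  have hKey := KEY N l
  have hKey' := congrArg (Nat.cast : ℕ → ℚ) hKey
  push_cast at hKey' hVpeel ⊢
  linarith

private lemma twoC : ∀ n : ℕ, Nat.choose (2*n+1) n + catalan n = 2 * Nat.choose (2*n) n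
  | 0 => by simp
  | m+1 => by
    have hp := Nat.choose_succ_succ (2*m+2) m
    simp only [Nat.succ_eq_add_one] at hp
    have h1 := cc m
    have h2 : centralBinom (m+1) = Nat.choose (2*(m+1)) (m+1) := rfl
    rw [h2] at h1
    ring_nf at hp h1 ⊢
    omega

private lemma L0 (n : ℕ) :
    2 * (∑ k ∈ range (n+1), catalan k * Nat.choose (2*(n-k)-1) (n-k-1))
      = 2 * Nat.choose (2*n) n := by
  rw [Finset.sum_range_succ]
  have hlast : catalan n * Nat.choose (2*(n-n)-1) (n-n-1) = catalan n := by
    simp [Nat.sub_self]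
  rw [hlast]
  have key : 2 * (∑ k ∈ range n, catalan k * Nat.choose (2*(n-k)-1) (n-k-1))
      = ∑ k ∈ range n, catalan k * centralBinom (n-k) := by
    rw [Finset.mul_sum]
    refine Finset.sum_congr rfl fun k hk => ?_
    rw [mem_range] at hk
    have h2 := two (n-k-1)
    rw [show (n-k-1)+1 = n-k by omega, show 2*(n-k-1)+1 = 2*(n-k)-1 by omega] at h2
    rw [show n-k-1 = (n-k)-1 by omega] at h2
    rw [h2]
    ring
  have hL3 := L3 n
  rw [Finset.sum_range_succ] at hL3
  have hlast2 : catalan n * centralBinom (n-n) = catalan n := by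
    simp [Nat.sub_self, Nat.centralBinom_zero]
  rw [hlast2] at hL3
  have htwoC := twoC n
  omega

private lemma main0 (n : ℕ) :
    ∑ k ∈ range (n+1), ((1:ℚ)/((2*k+1:ℕ):ℚ))
        * (Nat.choose (2*(n-k)-1) ((n-k)-1) : ℚ) * (Nat.choose (2*k+1) k : ℚ)
      = Nat.choose (2*n) n := by
  have hterm : ∀ k ∈ range (n+1), ((1:ℚ)/((2*k+1:ℕ):ℚ))
        * (Nat.choose (2*(n-k)-1) ((n-k)-1) : ℚ) * (Nat.choose (2*k+1) k : ℚ)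
      = ((catalan k * Nat.choose (2*(n-k)-1) ((n-k)-1) : ℕ) : ℚ) := by
    intro k hk
    have hc := congrArg (Nat.cast : ℕ → ℚ) (catC k)
    push_cast at hc ⊢
    have hden : (2*(k:ℚ)+1) ≠ 0 := by positivity
    field_simp
    nlinarith [hc]
  rw [Finset.sum_congr rfl hterm, ← Nat.cast_sum]
  have hL0 := L0 n
  have : (∑ k ∈ range (n+1), catalan k * Nat.choose (2*(n-k)-1) ((n-k)-1))
      = Nat.choose (2*n) n := by
    have e : ∀ k, Nat.choose (2*(n-k)-1) ((n-k)-1) = Nat.choose (2*(n-k)-1) (n-k-1) := fun k => rfl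
    omega
  exact_mod_cast this

/-- For all n ≥ 0 and 0 ≤ ℓ ≤ n:
∑_{j=ℓ}^{n} ((ℓ+1)/(2n−2j+ℓ+1))·C(2j−ℓ−1, j−1)·C(2n−2j+ℓ+1, n−j) = C(2n, n−ℓ). -/
theorem path_sum_identity (n ℓ : ℕ) (h : ℓ ≤ n) :
    ∑ j ∈ Finset.Icc ℓ n,
        ((ℓ + 1 : ℚ) / ((2 * n - 2 * j + ℓ + 1 : ℕ) : ℚ)) *
          Nat.choose (2 * j - ℓ - 1) (j - 1) *
          Nat.choose (2 * n - 2 * j + ℓ + 1) (n - j) =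
      Nat.choose (2 * n) (n - ℓ) := by
  rw [← Finset.Ico_add_one_right_eq_Icc, Finset.sum_Ico_eq_sum_range]
  rw [show n + 1 - ℓ = (n - ℓ) + 1 by omega]
  rw [← Finset.sum_range_reflect]
  cases ℓ with
  | zero =>
    rw [show n - 0 = n by omega]
    refine Eq.trans (Finset.sum_congr rfl fun k hk => ?_) (main0 n)
    rw [mem_range] at hk
    rw [show 2*n - 2*(0+(n+1-1-k)) + 0 + 1 = 2*k+1 by omega,
        show 2*(0+(n+1-1-k)) - 0 - 1 = 2*(n-k)-1 by omega,
        show 0+(n+1-1-k) - 1 = (n-k)-1 by omega,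
        show n - (0+(n+1-1-k)) = k by omega]
    norm_num
  | succ l =>
    have step : (∑ j ∈ range (n - (l + 1) + 1),
        (↑(l + 1) + 1 : ℚ) / ↑(2 * n - 2 * (l + 1 + (n - (l + 1) + 1 - 1 - j)) + (l + 1) + 1) *
          ↑((2 * (l + 1 + (n - (l + 1) + 1 - 1 - j)) - (l + 1) - 1).choose
              (l + 1 + (n - (l + 1) + 1 - 1 - j) - 1)) *
          ↑((2 * n - 2 * (l + 1 + (n - (l + 1) + 1 - 1 - j)) + (l + 1) + 1).choose
              (n - (l + 1 + (n - (l + 1) + 1 - 1 - j)))))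
        = ∑ k ∈ range ((n-(l+1))+1), (((l:ℚ)+2) / ((2*k+l+2 : ℕ) : ℚ))
            * (Nat.choose (2*((n-(l+1))-k)+l) (((n-(l+1))-k)+l) : ℚ)
            * (Nat.choose (2*k+l+2) k : ℚ) := by
      refine Finset.sum_congr rfl fun k hk => ?_
      rw [mem_range] at hk
      rw [show 2*n - 2*(l+1+(n-(l+1)+1-1-k)) + (l+1) + 1 = 2*k+l+2 by omega,
          show 2*(l+1+(n-(l+1)+1-1-k)) - (l+1) - 1 = 2*((n-(l+1))-k)+l by omega,
          show l+1+(n-(l+1)+1-1-k) - 1 = ((n-(l+1))-k)+l by omega,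
          show n - (l+1+(n-(l+1)+1-1-k)) = k by omega]
      push_cast
      ring
    rw [step, main1 (n-(l+1)) l,
      show 2*(n-(l+1))+2*l+2 = 2*n by omega]
end

section
/- For all n ≥ 0 and 0 ≤ ℓ ≤ n: ∑_{ℓ=0}^{n} ℓ * ((2ℓ+1)/(2n+1)) * C(2n+1, n-ℓ) = ∑_{j=0}^{n-1} C(2n, j) = (4^n − C(2n,n))/2. -/
open Finset

/-- Weighted telescoping sum. -/
lemma tele_aux (m : ℕ) (a : ℕ → ℚ) :
    ∑ ℓ ∈ range (m + 1), (ℓ : ℚ) * (a ℓ - a (ℓ + 1)) =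
      (∑ ℓ ∈ range (m + 1), a ℓ) - a 0 - m * a (m + 1) := by
  induction m with
  | zero => simp
  | succ m ih =>
    rw [sum_range_succ, ih, sum_range_succ _ (m + 1)]
    push_cast
    ring

/-- Half-row sum of an even row of Pascal's triangle. -/
lemma half_sum (n : ℕ) :
    2 * (∑ j ∈ range n, (2 * n).choose j) + (2 * n).choose n = 4 ^ n := by
  have hs : (∑ j ∈ range n, (2 * n).choose j) =
      ∑ j ∈ Ico (n + 1) (2 * n + 1), (2 * n).choose j := by
    have h1 : (∑ j ∈ range n, (2 * n).choose j)
        = ∑ j ∈ range n, (2 * n).choose (2 * n - j) :=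
      sum_congr rfl fun i hi =>
        (Nat.choose_symm (by have := mem_range.1 hi; omega)).symm
    rw [h1, range_eq_Ico, sum_Ico_reflect _ _ (by omega)]
    have e : 2 * n + 1 - n = n + 1 := by omega
    rw [e, Nat.sub_zero]
  have h2 : ∑ j ∈ range (2 * n + 1), (2 * n).choose j = 4 ^ n := by
    rw [Nat.sum_range_choose, pow_mul]; norm_num
  have h3 : (∑ j ∈ range (n + 1), (2 * n).choose j) +
      ∑ j ∈ Ico (n + 1) (2 * n + 1), (2 * n).choose j
      = ∑ j ∈ range (2 * n + 1), (2 * n).choose j :=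
    sum_range_add_sum_Ico _ (by omega)
  rw [sum_range_succ] at h3
  omega

/-- ∑_{ℓ=0}^{n} ℓ·((2ℓ+1)/(2n+1))·C(2n+1, n−ℓ) = ∑_{j=0}^{n−1} C(2n, j)
  = (4^n − C(2n,n))/2. -/
theorem average_level_identity (n : ℕ) :
    (∑ ℓ ∈ Finset.range (n + 1),
        (ℓ : ℚ) * ((2 * ℓ + 1 : ℚ) / (2 * n + 1)) * Nat.choose (2 * n + 1) (n - ℓ) =
      ∑ j ∈ Finset.range n, (Nat.choose (2 * n) j : ℚ)) ∧
    (∑ j ∈ Finset.range n, (Nat.choose (2 * n) j : ℚ) =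
      ((4 : ℚ) ^ n - Nat.choose (2 * n) n) / 2) := by
  have h2n : (2 * (n : ℚ) + 1) ≠ 0 := by positivity
  constructor
  · set a : ℕ → ℚ := fun ℓ => if ℓ ≤ n then ((2 * n).choose (n - ℓ) : ℚ) else 0 with ha
    have key : ∀ ℓ ∈ range (n + 1),
        (ℓ : ℚ) * ((2 * ℓ + 1 : ℚ) / (2 * n + 1)) * Nat.choose (2 * n + 1) (n - ℓ)
          = (ℓ : ℚ) * (a ℓ - a (ℓ + 1)) := by
      intro ℓ hℓ
      rw [mem_range, Nat.lt_succ_iff] at hℓ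
      rcases eq_or_lt_of_le hℓ with rfl | hlt
      · simp only [ha, Nat.sub_self, le_refl, if_true, Nat.lt_irrefl,
          if_neg (by omega : ¬ ℓ + 1 ≤ ℓ), Nat.choose_zero_right, Nat.cast_one]
        rw [div_self h2n]
        ring
      · -- ℓ < n; set k with n - ℓ = k + 1
        obtain ⟨k, hk⟩ : ∃ k, n = ℓ + k + 1 := ⟨n - ℓ - 1, by omega⟩
        have e1 : n - ℓ = k + 1 := by omega
        have e2 : n - (ℓ + 1) = k := by omega
        have hp : ((2 * n + 1).choose (k + 1) : ℚ)
            = (2 * n).choose k + (2 * n).choose (k + 1) := by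
          rw [Nat.choose_succ_succ (2 * n) k]; push_cast; ring
        have hm : ((2 * n + 1) : ℚ) * (2 * n).choose k
            = ((2 * n + 1).choose (k + 1)) * (k + 1) := by
          have := Nat.add_one_mul_choose_eq (2 * n) k
          exact_mod_cast congrArg (Nat.cast : ℕ → ℚ) this
        simp only [ha, if_pos hℓ, if_pos (by omega : ℓ + 1 ≤ n), e1, e2]
        have hn : (n : ℚ) = ℓ + k + 1 := by exact_mod_cast congrArg (Nat.cast : ℕ → ℚ) hk
        field_simp
        push_cast at hm hp ⊢
        linear_combination ((ℓ:ℚ) * (2*ℓ+1) + 2*ℓ*(k+1)) * hp + 2 * (ℓ:ℚ) * hm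
          - 2 * (ℓ:ℚ) * (((2*n).choose k : ℚ) + ((2*n).choose (k+1) : ℚ)) * hn
    rw [sum_congr rfl key, tele_aux n a]
    have ha0 : a 0 = (2 * n).choose n := by simp [ha]
    have han : a (n + 1) = 0 := by simp [ha]
    have hsum : (∑ ℓ ∈ range (n + 1), a ℓ)
        = ∑ j ∈ range (n + 1), ((2 * n).choose j : ℚ) := by
      rw [← sum_range_reflect (fun j => ((2 * n).choose j : ℚ)) (n + 1)]
      exact sum_congr rfl fun i hi => by
        rw [mem_range, Nat.lt_succ_iff] at hi
        simp [ha, hi, Nat.succ_sub_succ]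
    rw [ha0, han, hsum, sum_range_succ]
    ring
  · have hq := congrArg (Nat.cast : ℕ → ℚ) (half_sum n)
    push_cast at hq
    linarith
end

section
/- The average level of a node among all ordered trees with n edges is (1/2)√(πn) + O(1) as n → ∞. -/
/-!
Writing `N(n,ℓ) = C(2n,n+ℓ) − C(2n,n+ℓ+1)` makes both sums telescope: there are `C(2n,n)` nodes
in all, their levels add up to `(4ⁿ − C(2n,n))/2`, so the average level is `(4ⁿ/C(2n,n) − 1)/2`.
Since `(4ⁿ/C(2n,n))² = (2n+1)·W n` for the Wallis partial product `W`, Wallis' bounds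
`(2n+1)/(2n+2)·π/2 ≤ W n ≤ π/2` squeeze `4ⁿ/C(2n,n)` between `√(πn)` and `√(πn) + √(π/2)`.
-/

open Finset Real

/-- The total number of nodes at level ℓ among all ordered trees with n edges,
N(n,ℓ) = ((2ℓ+1)/(2n+1))·C(2n+1, n−ℓ). -/
noncomputable def Nlev (n ℓ : ℕ) : ℝ :=
  ((2 * ℓ + 1 : ℝ) / (2 * n + 1)) * Nat.choose (2 * n + 1) (n - ℓ)

/-- The average level of a node among all ordered trees with n edges. -/
noncomputable def avgLevel (n : ℕ) : ℝ :=
  (∑ ℓ ∈ Finset.range (n + 1), (ℓ : ℝ) * Nlev n ℓ) /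
    (∑ ℓ ∈ Finset.range (n + 1), Nlev n ℓ)

theorem Finset.sum_range_natCast_mul_sub_succ {R : Type*} [CommRing R] (f : ℕ → R) (N : ℕ) :
    ∑ i ∈ range N, (i : R) * (f i - f (i + 1)) = ∑ i ∈ range N, f (i + 1) - N * f N := by
  induction N with
  | zero => simp
  | succ N ih => rw [sum_range_succ, ih, sum_range_succ]; push_cast; ring

theorem Nat.two_mul_sum_upper_choose_add_centralBinom (n : ℕ) :
    2 * ∑ i ∈ range n, (2 * n).choose (n + (i + 1)) + centralBinom n = 4 ^ n := by
  have hlower :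
      ∑ i ∈ range n, (2 * n).choose i = ∑ i ∈ range n, (2 * n).choose (n + (i + 1)) := by
    rw [← sum_range_reflect]
    refine sum_congr rfl fun i hi => choose_symm_of_eq_add ?_
    have := mem_range.1 hi
    omega
  calc 2 * ∑ i ∈ range n, (2 * n).choose (n + (i + 1)) + centralBinom n
      = ∑ i ∈ range n, (2 * n).choose i + ∑ i ∈ range (n + 1), (2 * n).choose (n + i) := by
        rw [hlower, sum_range_succ', add_zero, centralBinom_eq_two_mul_choose]; ring
    _ = ∑ i ∈ range (2 * n + 1), (2 * n).choose i := by
        rw [show 2 * n + 1 = n + (n + 1) by ring]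
        exact (sum_range_add _ n (n + 1)).symm
    _ = 4 ^ n := by rw [sum_range_choose, pow_mul]; norm_num

theorem Nlev_eq_choose_sub_choose {n ℓ : ℕ} (h : ℓ ≤ n) :
    Nlev n ℓ = (2 * n).choose (n + ℓ) - (2 * n).choose (n + (ℓ + 1)) := by
  have hsymm : (2 * n + 1).choose (n - ℓ) = (2 * n + 1).choose (n + (ℓ + 1)) :=
    Nat.choose_symm_of_eq_add (by omega)
  have hpascal : (2 * n + 1).choose (n + (ℓ + 1))
      = (2 * n).choose (n + ℓ) + (2 * n).choose (n + (ℓ + 1)) :=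
    Nat.choose_succ_succ' _ _
  have hratio :
      ((2 * n).choose (n + (ℓ + 1)) : ℝ) * (n + ℓ + 1) = (2 * n).choose (n + ℓ) * (n - ℓ) := by
    have := Nat.choose_succ_right_eq (2 * n) (n + ℓ)
    rw [show 2 * n - (n + ℓ) = n - ℓ by omega] at this
    exact_mod_cast this
  unfold Nlev
  rw [hsymm, hpascal]
  field_simp
  push_cast
  linear_combination 2 * hratio

theorem sum_Nlev (n : ℕ) : ∑ ℓ ∈ range (n + 1), Nlev n ℓ = n.centralBinom := by
  rw [sum_congr rfl fun ℓ hℓ => Nlev_eq_choose_sub_choose (mem_range_succ_iff.1 hℓ),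
    sum_range_sub' (fun ℓ => ((2 * n).choose (n + ℓ) : ℝ)),
    Nat.choose_eq_zero_of_lt (show 2 * n < n + (n + 1) by omega),
    Nat.centralBinom_eq_two_mul_choose]
  simp

theorem sum_natCast_mul_Nlev (n : ℕ) :
    ∑ ℓ ∈ range (n + 1), (ℓ : ℝ) * Nlev n ℓ = (4 ^ n - n.centralBinom) / 2 := by
  have htail : (2 * n).choose (n + (n + 1)) = 0 := Nat.choose_eq_zero_of_lt (by omega)
  have h : 2 * ∑ i ∈ range n, ((2 * n).choose (n + (i + 1)) : ℝ) + n.centralBinom = 4 ^ n :=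
    mod_cast Nat.two_mul_sum_upper_choose_add_centralBinom n
  rw [sum_congr rfl fun ℓ hℓ => by rw [Nlev_eq_choose_sub_choose (mem_range_succ_iff.1 hℓ)],
    sum_range_natCast_mul_sub_succ (fun ℓ => ((2 * n).choose (n + ℓ) : ℝ)), sum_range_succ,
    htail]
  linear_combination h / 2

theorem avgLevel_eq (n : ℕ) : avgLevel n = ((4 : ℝ) ^ n / n.centralBinom - 1) / 2 := by
  have hC : (n.centralBinom : ℝ) ≠ 0 := by exact_mod_cast n.centralBinom_ne_zero
  rw [avgLevel, sum_Nlev, sum_natCast_mul_Nlev]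
  field_simp

theorem sq_four_pow_div_centralBinom (n : ℕ) :
    ((4 : ℝ) ^ n / n.centralBinom) ^ 2 = (2 * n + 1) * Wallis.W n := by
  have hfact : ((2 * n).factorial : ℝ) = n.centralBinom * n.factorial * n.factorial := by
    have := Nat.choose_mul_factorial_mul_factorial (show n ≤ 2 * n by omega)
    rw [show 2 * n - n = n by omega, ← Nat.centralBinom_eq_two_mul_choose] at this
    exact_mod_cast this.symm
  have hC : (n.centralBinom : ℝ) ≠ 0 := by exact_mod_cast n.centralBinom_ne_zero
  rw [Wallis.W_eq_factorial_ratio, hfact,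
    show (4 : ℝ) ^ n = 2 ^ (2 * n) by rw [pow_mul]; norm_num]
  field_simp
  ring

theorem pi_mul_le_sq_four_pow_div_centralBinom (n : ℕ) :
    π * n ≤ ((4 : ℝ) ^ n / n.centralBinom) ^ 2 := by
  have hW := Wallis.le_W n
  rw [sq_four_pow_div_centralBinom]
  calc π * n ≤ π * (2 * n + 1) ^ 2 / (4 * (n + 1)) := by
        rw [le_div_iff₀ (by positivity)]
        nlinarith [pi_pos]
    _ = (2 * n + 1) * ((2 * n + 1) / (2 * n + 2) * (π / 2)) := by
        field_simp
        ring
    _ ≤ (2 * n + 1) * Wallis.W n := by gcongr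

theorem sq_four_pow_div_centralBinom_le (n : ℕ) :
    ((4 : ℝ) ^ n / n.centralBinom) ^ 2 ≤ π * n + π / 2 := by
  have hW := Wallis.W_le n
  rw [sq_four_pow_div_centralBinom]
  calc (2 * n + 1) * Wallis.W n ≤ (2 * n + 1) * (π / 2) := by gcongr
    _ = π * n + π / 2 := by ring

theorem sqrt_pi_mul_le_four_pow_div_centralBinom (n : ℕ) :
    √(π * n) ≤ (4 : ℝ) ^ n / n.centralBinom :=
  Real.sqrt_le_left (by positivity) |>.2 (pi_mul_le_sq_four_pow_div_centralBinom n)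

theorem four_pow_div_centralBinom_le (n : ℕ) :
    (4 : ℝ) ^ n / n.centralBinom ≤ √(π * n) + √(π / 2) := by
  have hs := Real.sq_sqrt (by positivity : 0 ≤ π * n)
  have ht := Real.sq_sqrt (by positivity : 0 ≤ π / 2)
  have hx := sq_four_pow_div_centralBinom_le n
  nlinarith [Real.sqrt_nonneg (π * n), Real.sqrt_nonneg (π / 2),
    (by positivity : (0 : ℝ) ≤ (4 : ℝ) ^ n / n.centralBinom)]

/-- The average level of a node among all ordered trees with n edges is
(1/2)·√(πn) + O(1) as n → ∞. -/
theorem avgLevel_asymptotic :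
    Asymptotics.IsBigO Filter.atTop
      (fun n : ℕ => avgLevel n - (1 / 2) * Real.sqrt (Real.pi * n))
      (fun _ : ℕ => (1 : ℝ)) := by
  have hgap : √(π / 2) ≤ 2 :=
    Real.sqrt_le_left zero_le_two |>.2 (by linarith [pi_le_four])
  refine Asymptotics.IsBigO.of_bound 1 (Filter.Eventually.of_forall fun n => ?_)
  have hlow := sqrt_pi_mul_le_four_pow_div_centralBinom n
  have hupp := four_pow_div_centralBinom_le n
  rw [norm_one, mul_one, Real.norm_eq_abs, abs_le, avgLevel_eq]
  constructor <;> linarith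
end

section
/- Let C(z) be the formal power series satisfying C = 1 + zC² with C(0) = 1 (the Catalan generating function). Then for all n ≥ 0, (f_n(−z) − f_{n-1}(−z)·z·C(z)) · C(z)^n = 1 as formal power series. -/
/-!
Write `g n = f_n(-z) - f_{n-1}(-z) z C`. The Fibonacci recurrence `f_{n+1} = f_n + z f_{n-1}`,
read at `-z`, together with `z C² = C - 1`, gives `g (n+1) * C = g n`; since `g 0 = 1`,
induction yields `g n * C ^ n = 1`.
-/

open Polynomial

/-- The Fibonacci polynomial `f_m(z) = ∑_{k=0}^{⌊m/2⌋} C(m-k,k) z^k` for `m ≥ 0`,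
and `f_m = 0` for `m < 0`. -/
noncomputable def fibP (m : ℤ) : Polynomial ℚ :=
  if m < 0 then 0
  else ∑ k ∈ Finset.range (m.toNat / 2 + 1),
    Polynomial.C ((Nat.choose (m.toNat - k) k : ℚ)) * Polynomial.X ^ k

/-- The polynomial `f_m(−z)`. -/
noncomputable def fibPneg (m : ℤ) : Polynomial ℚ := (fibP m).comp (-Polynomial.X)

lemma fibP_neg_one : fibP (-1) = 0 := if_pos (by norm_num)
lemma fibP_zero : fibP 0 = 1 := by simp [fibP]
lemma fibP_one : fibP 1 = 1 := by simp [fibP]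

lemma coeff_fibP_natCast (m j : ℕ) : (fibP m).coeff j = (m - j).choose j := by
  simp only [fibP, Int.natCast_nonneg, not_lt.mpr, if_false, Int.toNat_natCast,
    finsetSum_coeff, coeff_C_mul_X_pow]
  rw [Finset.sum_ite_eq, ite_eq_left_iff]
  intro hj
  rw [Nat.choose_eq_zero_of_lt (by simp at hj; omega), Nat.cast_zero]

lemma fibP_natCast_add_two (m : ℕ) :
    fibP ((m + 2 : ℕ) : ℤ) = fibP ((m + 1 : ℕ) : ℤ) + X * fibP m := by
  ext (_ | j)
  · simp only [coeff_add, coeff_fibP_natCast, mul_coeff_zero, coeff_X_zero]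
    simp
  · rw [coeff_add, coeff_X_mul, coeff_fibP_natCast, coeff_fibP_natCast, coeff_fibP_natCast]
    rcases le_or_gt j m with hjm | hmj
    · rw [show m + 2 - (j + 1) = m - j + 1 by omega, show m + 1 - (j + 1) = m - j by omega,
        Nat.choose_succ_succ, Nat.cast_add, add_comm]
    · rw [Nat.choose_eq_zero_of_lt (by omega), Nat.choose_eq_zero_of_lt (by omega),
        Nat.choose_eq_zero_of_lt (by omega), Nat.cast_zero, add_zero]

lemma fibPneg_natCast_add_one (n : ℕ) :
    fibPneg (n + 1) = fibPneg n - X * fibPneg (n - 1) := by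
  cases n with
  | zero => simp [fibPneg, fibP_zero, fibP_one, fibP_neg_one]
  | succ m =>
    rw [show ((m + 1 : ℕ) : ℤ) + 1 = (m + 2 : ℕ) by omega, show ((m + 1 : ℕ) : ℤ) - 1 = m by omega,
      fibPneg, fibP_natCast_add_two, fibPneg, fibPneg, add_comp, mul_comp, X_comp]
    ring

theorem fibP_catalan_inverse_general (Cs : PowerSeries ℚ)
    (hC : Cs = 1 + PowerSeries.X * Cs ^ 2)
    (n : ℕ) :
    (((fibPneg (n : ℤ)) : PowerSeries ℚ)
        - ((fibPneg ((n : ℤ) - 1)) : PowerSeries ℚ) * PowerSeries.X * Cs)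
      * Cs ^ n = 1 := by
  induction n with
  | zero => simp [fibPneg, fibP_zero, fibP_neg_one]
  | succ n ih =>
    push_cast
    rw [add_sub_cancel_right, fibPneg_natCast_add_one]
    push_cast
    linear_combination ih + Cs ^ n * (fibPneg n : PowerSeries ℚ) * hC

/-- If C is the Catalan generating function (C = 1 + zC², C(0) = 1), then
(f_n(−z) − f_{n-1}(−z)·z·C(z))·C(z)^n = 1 for all n ≥ 0. -/
theorem fibP_catalan_inverse (Cs : PowerSeries ℚ)
    (hC : Cs = 1 + PowerSeries.X * Cs ^ 2)
    (hC0 : PowerSeries.constantCoeff Cs = 1) (n : ℕ) :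
    (((fibPneg (n : ℤ)) : PowerSeries ℚ)
        - ((fibPneg ((n : ℤ) - 1)) : PowerSeries ℚ) * PowerSeries.X * Cs)
      * Cs ^ n = 1 :=
  fibP_catalan_inverse_general Cs hC n
end

section
/- For all n ≥ 0, the Fibonacci polynomials satisfy n·f_n(−z) − 2z·(d/dz)f_n(−z) = −(d/dz)f_{n+1}(−z). -/
open Polynomial

lemma coeff_fibPneg (n k : ℕ) :
    (fibPneg (n : ℤ)).coeff k = (-1) ^ k * (Nat.choose (n - k) k : ℚ) := by
  have hn : ¬ ((n : ℤ) < 0) := by omega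
  have hneg : (-X : ℚ[X]) = C (-1) * X := by simp
  simp only [fibPneg, fibP, if_neg hn, Int.toNat_natCast, Polynomial.sum_comp,
    Polynomial.mul_comp, Polynomial.C_comp, Polynomial.pow_comp,
    Polynomial.X_comp, hneg, mul_pow, ← Polynomial.C_pow,
    Polynomial.finset_sum_coeff, Polynomial.coeff_C_mul,
    Polynomial.coeff_X_pow, mul_ite, mul_zero, mul_one]
  rw [Finset.sum_eq_single k]
  · simp [mul_comm]
  · intro b _ hb; simp [Ne.symm hb]
  · intro hk
    simp only [Finset.mem_range, not_lt] at hk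
    have : (n - k).choose k = 0 := Nat.choose_eq_zero_of_lt (by omega)
    simp [this]

lemma key (n k : ℕ) :
    ((n : ℚ) - 2 * k) * (Nat.choose (n - k) k : ℚ)
      = (k + 1) * (Nat.choose (n - k) (k + 1) : ℚ) := by
  rcases le_or_gt (2 * k) n with h | h
  · have h1 := Nat.choose_succ_right_eq (n - k) k
    have h2 : n - k - k = n - 2 * k := by omega
    rw [h2] at h1
    have h3 : ((Nat.choose (n - k) (k + 1) * (k + 1) : ℕ) : ℚ)
        = ((Nat.choose (n - k) k * (n - 2 * k) : ℕ) : ℚ) := by exact_mod_cast h1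
    push_cast [Nat.cast_sub h] at h3
    linarith
  · have h1 : n - k < k := by omega
    rw [Nat.choose_eq_zero_of_lt h1, Nat.choose_eq_zero_of_lt (by omega)]
    simp

/-- n·f_n(−z) − 2z·(d/dz)f_n(−z) = −(d/dz)f_{n+1}(−z) for all n ≥ 0. -/
theorem fibPneg_deriv (n : ℕ) :
    (n : ℚ) • fibPneg (n : ℤ) - 2 * Polynomial.X * Polynomial.derivative (fibPneg (n : ℤ)) =
      -Polynomial.derivative (fibPneg ((n : ℤ) + 1)) := by
  have hcast : ((n : ℤ) + 1) = ((n + 1 : ℕ) : ℤ) := by push_cast; ring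
  ext k
  rw [hcast]
  have hX : (2 * Polynomial.X * Polynomial.derivative (fibPneg (n : ℤ))).coeff k
      = 2 * (k : ℚ) * ((-1) ^ k * (Nat.choose (n - k) k : ℚ)) := by
    rcases k with _ | j
    · simp [mul_assoc, Polynomial.mul_coeff_zero]
    · rw [mul_assoc, Polynomial.coeff_ofNat_mul, Polynomial.coeff_X_mul,
        Polynomial.coeff_derivative, coeff_fibPneg]
      push_cast; ring
  rw [Polynomial.coeff_sub, Polynomial.coeff_smul, hX, Polynomial.coeff_neg,
    Polynomial.coeff_derivative, coeff_fibPneg, coeff_fibPneg, smul_eq_mul]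
  have h2 : n + 1 - (k + 1) = n - k := by omega
  rw [h2]
  have := key n k
  push_cast at this ⊢
  rcases Nat.even_or_odd k with he | ho
  · rw [he.neg_one_pow, (by simpa using he.add_one : Odd (k+1)).neg_one_pow]
    linarith
  · rw [ho.neg_one_pow, (by simpa using ho.add_one : Even (k+1)).neg_one_pow]
    linarith
end
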